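/- Let T = Cat(d₁, d₂, …, d_ℓ) be a caterpillar tree and κ ≥ σ(T) an integer. If T is κ-two-sided strong edge-pre-colorable, then T is κ'-two-sided strong edge-pre-colorable for every integer κ' ≥ κ. -/
import Mathlib


open SimpleGraph

/-- The degree of a vertex (cardinality of its neighbor set). -/
noncomputable def ndeg {V : Type*} (G : SimpleGraph V) (v : V) : ℕ :=
  (G.neighborSet v).ncard

/-- `σ(G)`: the maximum of `deg x + deg y - 1` over all edges `xy` of `G`. -/
noncomputable def sigmaG {V : Type*} (G : SimpleGraph V) : ℕ :=
  sSup {m | ∃ x y, G.Adj x y ∧ m = ndeg G x + ndeg G y - 1}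

/-- The maximum degree `Δ(G)`. -/
noncomputable def maxDeg {V : Type*} (G : SimpleGraph V) : ℕ :=
  sSup (Set.range (ndeg G))

/-- Two edges are at distance at most two: they share an endpoint, or an endpoint of
one is adjacent to an endpoint of the other. -/
def EdgesNear {V : Type*} (G : SimpleGraph V) (e f : Sym2 V) : Prop :=
  ∃ u v, u ∈ e ∧ v ∈ f ∧ (u = v ∨ G.Adj u v)

/-- A strong edge-coloring: every two distinct edges at distance at most two
receive different colors. -/
def IsStrongEdgeColoring {V α : Type*} (G : SimpleGraph V) (φ : Sym2 V → α) : Prop :=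
  ∀ e ∈ G.edgeSet, ∀ f ∈ G.edgeSet, e ≠ f → EdgesNear G e f → φ e ≠ φ f

/-- The strong chromatic index `χ'ₛ(G)`: the least `k` such that `G` has a strong
edge-coloring with colors `0, …, k-1`. -/
noncomputable def strongChromaticIndex {V : Type*} (G : SimpleGraph V) : ℕ :=
  sInf {k | ∃ φ : Sym2 V → ℕ, (∀ e ∈ G.edgeSet, φ e < k) ∧ IsStrongEdgeColoring G φ}

/-- The set of edges incident with a vertex `v`. -/
def Einc {V : Type*} (G : SimpleGraph V) (v : V) : Set (Sym2 V) :=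
  {e ∈ G.edgeSet | v ∈ e}
/-- The vertex type of the caterpillar tree `Cat(d 1, …, d ℓ)`: the spine
`x_0, x_1, …, x_{ℓ+1}` (as `Fin (ℓ+2)`) together with `d (i+1) - 2` pendant leaves
attached to the spine vertex `x_{i+1}` for each `i : Fin ℓ`. -/
abbrev CatV (ℓ : ℕ) (d : ℕ → ℕ) : Type :=
  Fin (ℓ + 2) ⊕ (Σ i : Fin ℓ, Fin (d (i.val + 1) - 2))

/-- Generating relation for the caterpillar: consecutive spine vertices are adjacent,
and each leaf in the `i`-th leaf group is adjacent to the spine vertex `x_{i+1}`. -/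
def CatRel (ℓ : ℕ) (d : ℕ → ℕ) : CatV ℓ d → CatV ℓ d → Prop
  | Sum.inl i, Sum.inl j => (j : ℕ) = (i : ℕ) + 1
  | Sum.inr p, Sum.inl k => (k : ℕ) = (p.1 : ℕ) + 1
  | _, _ => False

/-- The caterpillar tree `Cat(d 1, …, d ℓ)` with spine `x_0, …, x_{ℓ+1}`, in which
the spine vertex `x_i` has degree `d i` for `1 ≤ i ≤ ℓ` (provided `d i ≥ 2`). -/
def Cat (ℓ : ℕ) (d : ℕ → ℕ) : SimpleGraph (CatV ℓ d) :=
  SimpleGraph.fromRel (CatRel ℓ d)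

/-- There exists a strong edge-coloring `φ` of `Cat ℓ d` using colors from `C` with
`φ(E 1) = C₁`, `φ(E ℓ) = Cl`, `φ(x₀x₁) = α₀` and `φ(x_ℓ x_{ℓ+1}) = αl`. -/
def CatPrecolorExists (ℓ : ℕ) (d : ℕ → ℕ) (C C₁ Cl : Finset ℕ) (α₀ αl : ℕ) : Prop :=
  ∃ φ : Sym2 (CatV ℓ d) → ℕ,
    (∀ e ∈ (Cat ℓ d).edgeSet, φ e ∈ C) ∧
    IsStrongEdgeColoring (Cat ℓ d) φ ∧
    φ '' Einc (Cat ℓ d) (Sum.inl ⟨1, by omega⟩) = ↑C₁ ∧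
    φ '' Einc (Cat ℓ d) (Sum.inl ⟨ℓ, by omega⟩) = ↑Cl ∧
    φ s(Sum.inl ⟨0, by omega⟩, Sum.inl ⟨1, by omega⟩) = α₀ ∧
    φ s(Sum.inl ⟨ℓ, by omega⟩, Sum.inl ⟨ℓ + 1, by omega⟩) = αl

/-- `Cat ℓ d` is `κ`-two-sided strong edge-pre-colorable: for every `κ`-set `C` of colors,
all `C₁, Cl ⊆ C` with `|C₁| = d 1`, `|Cl| = d ℓ`, and all `α₀ ∈ C₁`, `αl ∈ Cl`, there is
a strong edge-coloring `φ` of `Cat ℓ d` with colors from `C` such that `φ(E 1) = C₁`,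
`φ(E ℓ) = Cl`, `φ(x₀x₁) = α₀` and `φ(x_ℓ x_{ℓ+1}) = αl`. -/
def TwoSidedPrecolorable (ℓ : ℕ) (d : ℕ → ℕ) (κ : ℕ) : Prop :=
  ∀ C C₁ Cl : Finset ℕ, C.card = κ → C₁ ⊆ C → Cl ⊆ C →
    C₁.card = d 1 → Cl.card = d ℓ →
    ∀ α₀ ∈ C₁, ∀ αl ∈ Cl, CatPrecolorExists ℓ d C C₁ Cl α₀ αl

/-- `ℓ_σ` from the refined key lemma: `ℓ_5 = 8`, `ℓ_6 = ℓ_7 = 7`, `ℓ_σ = σ` for `σ ≥ 8`. -/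
def ellSigma (s : ℕ) : ℕ :=
  if s = 5 then 8 else if s ≤ 7 then 7 else s

lemma cat_adj_spine (ℓ : ℕ) (d : ℕ → ℕ) {i j : Fin (ℓ+2)} (hij : (j:ℕ) = (i:ℕ) + 1) :
    (Cat ℓ d).Adj (Sum.inl i) (Sum.inl j) := by
  rw [Cat, SimpleGraph.fromRel_adj]
  refine ⟨?_, Or.inl hij⟩
  intro hcon
  rw [Sum.inl.injEq] at hcon
  rw [hcon] at hij
  omega

lemma cat_adj_leaf (ℓ : ℕ) (d : ℕ → ℕ) (p : Σ i : Fin ℓ, Fin (d (i.val + 1) - 2))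
    {k : Fin (ℓ+2)} (hk : (k:ℕ) = (p.1 : ℕ) + 1) :
    (Cat ℓ d).Adj (Sum.inl k) (Sum.inr p) := by
  rw [Cat, SimpleGraph.fromRel_adj]
  exact ⟨by simp, Or.inr hk⟩

lemma cat_not_adj_spine (ℓ : ℕ) (d : ℕ → ℕ) {i j : Fin (ℓ+2)}
    (h1 : (j:ℕ) ≠ (i:ℕ) + 1) (h2 : (i:ℕ) ≠ (j:ℕ) + 1) :
    ¬ (Cat ℓ d).Adj (Sum.inl i) (Sum.inl j) := by
  rw [Cat, SimpleGraph.fromRel_adj]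
  rintro ⟨-, hr | hr⟩
  · exact h1 hr
  · exact h2 hr

lemma ndeg_spine_ge (ℓ : ℕ) (d : ℕ → ℕ) (k : ℕ) (hk1 : 1 ≤ k) (hk : k ≤ ℓ)
    (hd2 : 2 ≤ d k) :
    d k ≤ ndeg (Cat ℓ d) (Sum.inl ⟨k, by omega⟩) := by
  classical
  have hi0 : k - 1 < ℓ := by omega
  set i0 : Fin ℓ := ⟨k-1, hi0⟩ with hi0def
  set A : Set (CatV ℓ d) :=
    {Sum.inl ⟨k-1, by omega⟩, Sum.inl ⟨k+1, by omega⟩} with hA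
  set B : Set (CatV ℓ d) :=
    (fun j : Fin (d ((i0:ℕ)+1) - 2) => (Sum.inr ⟨i0, j⟩ : CatV ℓ d)) '' Set.univ with hBdef
  have hsub : A ∪ B ⊆ (Cat ℓ d).neighborSet (Sum.inl ⟨k, by omega⟩) := by
    rintro w (hw | hw)
    · rcases hw with rfl | rfl
      · exact ((cat_adj_spine ℓ d (i := ⟨k-1, by omega⟩) (j := ⟨k, by omega⟩) (by simp; omega)).symm :)
      · exact (cat_adj_spine ℓ d (i := ⟨k, by omega⟩) (j := ⟨k+1, by omega⟩) (by simp))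
    · obtain ⟨j, -, rfl⟩ := hw
      exact cat_adj_leaf ℓ d ⟨i0, j⟩ (by simp [hi0def]; omega)
  have hAcard : A.ncard = 2 := by
    apply Set.ncard_pair
    simp only [ne_eq, Sum.inl.injEq, Fin.mk.injEq]
    omega
  have hBcard : B.ncard = d k - 2 := by
    rw [hBdef, Set.ncard_image_of_injective _ (fun a b hab => by simpa using hab),
      Set.ncard_univ]
    have : (i0:ℕ) + 1 = k := by simp [hi0def]; omega
    simp [this]
  have hdisj : Disjoint A B := by
    rw [Set.disjoint_left]
    rintro a (rfl | rfl) ⟨j, -, hj⟩ <;> simp at hj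
  calc d k = 2 + (d k - 2) := by omega
    _ = (A ∪ B).ncard := by rw [Set.ncard_union_eq hdisj, hAcard, hBcard]
    _ ≤ _ := Set.ncard_le_ncard hsub (Set.toFinite _)

lemma ndeg_ge_one {V : Type*} [Finite V] (G : SimpleGraph V) {x y : V} (hadj : G.Adj x y) :
    1 ≤ ndeg G x :=
  (Set.ncard_pos (Set.toFinite _)).2 ⟨y, hadj⟩

lemma sigmaG_ge {V : Type*} [Finite V] (G : SimpleGraph V) {x y : V} (hadj : G.Adj x y) :
    ndeg G x + ndeg G y - 1 ≤ sigmaG G := by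
  apply le_csSup
  · refine ⟨2 * Nat.card V, ?_⟩
    rintro m ⟨a, b, -, rfl⟩
    have h1 : ndeg G a ≤ Nat.card V := by
      rw [ndeg, ← Set.ncard_univ]
      exact Set.ncard_le_ncard (Set.subset_univ _) (Set.toFinite _)
    have h2 : ndeg G b ≤ Nat.card V := by
      rw [ndeg, ← Set.ncard_univ]
      exact Set.ncard_le_ncard (Set.subset_univ _) (Set.toFinite _)
    omega
  · exact ⟨x, y, hadj, rfl⟩

theorem twoSided_mono_colors (ℓ : ℕ) (hℓ : 1 ≤ ℓ) (d : ℕ → ℕ)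
    (hd : ∀ i, 1 ≤ i → i ≤ ℓ → 2 ≤ d i)
    (κ κ' : ℕ) (hκ : sigmaG (Cat ℓ d) ≤ κ) (hκ' : κ ≤ κ')
    (h : TwoSidedPrecolorable ℓ d κ) :
    TwoSidedPrecolorable ℓ d κ' := by
  classical
  have hd1 : 2 ≤ d 1 := hd 1 le_rfl hℓ
  have hdl : 2 ≤ d ℓ := hd ℓ hℓ le_rfl
  -- basic adjacency facts
  have hadj01 : (Cat ℓ d).Adj (Sum.inl ⟨0, by omega⟩) (Sum.inl ⟨1, by omega⟩) :=
    cat_adj_spine ℓ d (by simp)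
  have hadjl : (Cat ℓ d).Adj (Sum.inl ⟨ℓ, by omega⟩) (Sum.inl ⟨ℓ+1, by omega⟩) :=
    cat_adj_spine ℓ d (by simp)
  -- κ ≥ d 1 and κ ≥ d ℓ
  have hκd1 : d 1 ≤ κ := by
    have hs := sigmaG_ge (Cat ℓ d) hadj01
    have h1 : d 1 ≤ ndeg (Cat ℓ d) (Sum.inl ⟨1, by omega⟩) := ndeg_spine_ge ℓ d 1 le_rfl hℓ hd1
    have h0 : 1 ≤ ndeg (Cat ℓ d) (Sum.inl ⟨0, by omega⟩) := ndeg_ge_one _ hadj01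
    omega
  have hκdl : d ℓ ≤ κ := by
    have hs := sigmaG_ge (Cat ℓ d) hadjl
    have h1 : d ℓ ≤ ndeg (Cat ℓ d) (Sum.inl ⟨ℓ, by omega⟩) := ndeg_spine_ge ℓ d ℓ hℓ le_rfl hdl
    have h0 : 1 ≤ ndeg (Cat ℓ d) (Sum.inl ⟨ℓ+1, by omega⟩) := ndeg_ge_one _ hadjl.symm
    omega
  by_cases hl3 : 3 ≤ ℓ
  case neg =>
    -- ℓ = 1 or ℓ = 2 : the hypothesis h is contradictory
    exfalso
    obtain ⟨φ, hC, hS, hE1, hEl, ha0, hal⟩ :=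
      h (Finset.range κ) (Finset.range (d 1)) (Finset.range (d ℓ))
        (Finset.card_range _) (Finset.range_subset_range.2 hκd1) (Finset.range_subset_range.2 hκdl)
        (Finset.card_range _) (Finset.card_range _)
        0 (Finset.mem_range.2 (by omega)) 0 (Finset.mem_range.2 (by omega))
    have he0 : s(Sum.inl ⟨0, by omega⟩, (Sum.inl ⟨1, by omega⟩ : CatV ℓ d)) ∈ (Cat ℓ d).edgeSet :=
      hadj01
    have hel : s(Sum.inl ⟨ℓ, by omega⟩, (Sum.inl ⟨ℓ+1, by omega⟩ : CatV ℓ d)) ∈ (Cat ℓ d).edgeSet :=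
      hadjl
    have hne : s(Sum.inl ⟨0, by omega⟩, (Sum.inl ⟨1, by omega⟩ : CatV ℓ d)) ≠
        s(Sum.inl ⟨ℓ, by omega⟩, (Sum.inl ⟨ℓ+1, by omega⟩ : CatV ℓ d)) := by
      intro hcon
      have hmem : (Sum.inl ⟨ℓ+1, by omega⟩ : CatV ℓ d) ∈
          s(Sum.inl ⟨0, by omega⟩, (Sum.inl ⟨1, by omega⟩ : CatV ℓ d)) := by
        rw [hcon]; exact Sym2.mem_mk_right _ _
      rcases Sym2.mem_iff.1 hmem with hc | hc <;>
        · rw [Sum.inl.injEq] at hc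
          have hcv := congrArg Fin.val hc
          simp at hcv
          try omega
    have hnear : EdgesNear (Cat ℓ d)
        s(Sum.inl ⟨0, by omega⟩, (Sum.inl ⟨1, by omega⟩ : CatV ℓ d))
        s(Sum.inl ⟨ℓ, by omega⟩, (Sum.inl ⟨ℓ+1, by omega⟩ : CatV ℓ d)) := by
      refine ⟨Sum.inl ⟨1, by omega⟩, Sum.inl ⟨ℓ, by omega⟩,
        Sym2.mem_mk_right _ _, Sym2.mem_mk_left _ _, ?_⟩
      have : ℓ = 1 ∨ ℓ = 2 := by omega
      rcases this with rfl | rfl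
      · exact Or.inl rfl
      · exact Or.inr (cat_adj_spine _ d (by simp))
    exact hS _ he0 _ hel hne hnear (ha0.trans hal.symm)
  case pos =>
    -- κ ≥ d 1 + 1
    have hκd11 : d 1 + 1 ≤ κ := by
      have hadj12 : (Cat ℓ d).Adj (Sum.inl ⟨1, by omega⟩) (Sum.inl ⟨2, by omega⟩) :=
        cat_adj_spine ℓ d (by simp)
      have hs := sigmaG_ge (Cat ℓ d) hadj12
      have h1 : d 1 ≤ ndeg (Cat ℓ d) (Sum.inl ⟨1, by omega⟩) := ndeg_spine_ge ℓ d 1 le_rfl hℓ hd1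
      have h2 : 2 ≤ ndeg (Cat ℓ d) (Sum.inl ⟨2, by omega⟩) := by
        have := ndeg_spine_ge ℓ d 2 (by omega) (by omega) (hd 2 (by omega) (by omega))
        have h22 := hd 2 (by omega) (by omega)
        omega
      omega
    -- one-step lemma
    have step : ∀ n, κ ≤ n → TwoSidedPrecolorable ℓ d n → TwoSidedPrecolorable ℓ d (n+1) := by
      intro n hn hPre C' C₁ Cl hC' h1s hls h1c hlc α₀ hα₀ αl hαl
      by_cases hun : (C₁ ∪ Cl).card ≤ n
      · -- the union fits into n colors
        obtain ⟨C, hCs, hCs', hCc⟩ := Finset.exists_subsuperset_card_eq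
          (Finset.union_subset h1s hls) hun (by rw [hC']; omega)
        obtain ⟨φ, h1, h2, h3, h4, h5, h6⟩ :=
          hPre C C₁ Cl hCc (Finset.subset_union_left.trans hCs)
            (Finset.subset_union_right.trans hCs) h1c hlc α₀ hα₀ αl hαl
        exact ⟨φ, fun e he => hCs' (h1 e he), h2, h3, h4, h5, h6⟩
      · -- C₁ ∪ Cl = C'
        have hsubu : C₁ ∪ Cl ⊆ C' := Finset.union_subset h1s hls
        have huc : C₁ ∪ Cl = C' :=
          Finset.eq_of_subset_of_card_le hsubu (by
            have := Finset.card_le_card hsubu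
            omega)
        have hunc : (C₁ ∪ Cl).card = n + 1 := by rw [huc, hC']
        have hcl1 : (Cl \ C₁).card + C₁.card = n + 1 := by
          rw [Finset.card_sdiff_add_card, Finset.union_comm, hunc]
        have hc1l : (C₁ \ Cl).card + Cl.card = n + 1 := by
          rw [Finset.card_sdiff_add_card, hunc]
        -- choose c ∈ Cl \ C₁, c ≠ αl
        have h2le : 2 ≤ (Cl \ C₁).card := by omega
        have hepos : 0 < ((Cl \ C₁).erase αl).card := by
          have := Finset.pred_card_le_card_erase (s := Cl \ C₁) (a := αl)
          omega
        obtain ⟨c, hc⟩ := Finset.card_pos.1 hepos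
        have hcαl : c ≠ αl := (Finset.mem_erase.1 hc).1
        have hcCl : c ∈ Cl := (Finset.mem_sdiff.1 (Finset.mem_erase.1 hc).2).1
        have hcC1 : c ∉ C₁ := (Finset.mem_sdiff.1 (Finset.mem_erase.1 hc).2).2
        -- choose cs ∈ C₁ \ Cl
        obtain ⟨cs, hcs⟩ := Finset.card_pos.1 (show 0 < (C₁ \ Cl).card by omega)
        have hcsC1 : cs ∈ C₁ := (Finset.mem_sdiff.1 hcs).1
        have hcsCl : cs ∉ Cl := (Finset.mem_sdiff.1 hcs).2
        have hcsc : cs ≠ c := fun hcon => hcC1 (hcon ▸ hcsC1)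
        set C : Finset ℕ := C'.erase c with hCdef
        have hCcard : C.card = n := by
          rw [hCdef, Finset.card_erase_of_mem (hls hcCl), hC']
          omega
        set Cl2 : Finset ℕ := insert cs (Cl.erase c) with hCl2def
        have hCl2card : Cl2.card = d ℓ := by
          rw [hCl2def, Finset.card_insert_of_notMem
            (fun hmem => hcsCl (Finset.mem_of_mem_erase hmem)),
            Finset.card_erase_of_mem hcCl, hlc]
          omega
        have hC1C : C₁ ⊆ C := fun x hx =>
          Finset.mem_erase.2 ⟨fun he => hcC1 (he ▸ hx), h1s hx⟩
        have hCl2C : Cl2 ⊆ C := by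
          rw [hCl2def]
          refine Finset.insert_subset (Finset.mem_erase.2 ⟨hcsc, h1s hcsC1⟩) ?_
          intro x hx
          exact Finset.mem_erase.2 ⟨(Finset.mem_erase.1 hx).1, hls (Finset.mem_of_mem_erase hx)⟩
        have hαlCl2 : αl ∈ Cl2 :=
          Finset.mem_insert_of_mem (Finset.mem_erase.2 ⟨fun hcon => hcαl hcon.symm, hαl⟩)
        obtain ⟨φ, hφC, hφS, hφ1, hφl, hφa0, hφal⟩ :=
          hPre C C₁ Cl2 hCcard hC1C hCl2C h1c hCl2card α₀ hα₀ αl hαlCl2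
        -- the edge of E_ℓ colored cs
        have hcs2 : cs ∈ φ '' Einc (Cat ℓ d) (Sum.inl ⟨ℓ, by omega⟩) := by
          rw [hφl]
          exact_mod_cast Finset.mem_insert_self cs (Cl.erase c)
        obtain ⟨f, hfE, hfcs⟩ := hcs2
        have hfedge : f ∈ (Cat ℓ d).edgeSet := hfE.1
        have hxlf : (Sum.inl ⟨ℓ, by omega⟩ : CatV ℓ d) ∈ f := hfE.2
        have hx1f : (Sum.inl ⟨1, by omega⟩ : CatV ℓ d) ∉ f := by
          intro hmem
          have hnexy : (Sum.inl ⟨1, by omega⟩ : CatV ℓ d) ≠ Sum.inl ⟨ℓ, by omega⟩ := by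
            simp only [ne_eq, Sum.inl.injEq, Fin.mk.injEq]
            omega
          have hfeq : f = s(Sum.inl ⟨1, by omega⟩, (Sum.inl ⟨ℓ, by omega⟩ : CatV ℓ d)) :=
            (Sym2.mem_and_mem_iff hnexy).1 ⟨hmem, hxlf⟩
          rw [hfeq, SimpleGraph.mem_edgeSet] at hfedge
          exact cat_not_adj_spine ℓ d (by simp; omega) (by simp; omega) hfedge
        refine ⟨fun e => if e = f then c else φ e, ?_, ?_, ?_, ?_, ?_, ?_⟩
        · -- colors in C'
          intro e he
          beta_reduce
          by_cases hef : e = f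
          · rw [if_pos hef]; exact hls hcCl
          · rw [if_neg hef]; exact Finset.erase_subset _ _ (hφC e he)
        · -- strong
          intro e he g hg hne hnear
          beta_reduce
          by_cases hef : e = f
          · subst hef
            rw [if_pos rfl, if_neg (fun hcon : g = e => hne hcon.symm)]
            intro hcon
            have hmem := hφC g hg
            rw [← hcon] at hmem
            exact Finset.notMem_erase c C' hmem
          · rw [if_neg hef]
            by_cases hgf : g = f
            · subst hgf
              rw [if_pos rfl]
              intro hcon
              have hmem := hφC e he
              rw [hcon] at hmem
              exact Finset.notMem_erase c C' hmem
            · rw [if_neg hgf]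
              exact hφS e he g hg hne hnear
        · -- E₁ colors
          have hcong : ∀ e ∈ Einc (Cat ℓ d) (Sum.inl ⟨1, by omega⟩ : CatV ℓ d),
              (if e = f then c else φ e) = φ e := by
            intro e he
            exact if_neg (by rintro rfl; exact hx1f he.2)
          rw [Set.image_congr hcong]
          exact hφ1
        · -- E_ℓ colors
          ext b
          simp only [Set.mem_image, Finset.mem_coe]
          constructor
          · rintro ⟨e, heE, rfl⟩
            by_cases hef : e = f
            · rw [if_pos hef]; exact hcCl
            · rw [if_neg hef]
              have hmem : φ e ∈ (Cl2 : Set ℕ) := hφl ▸ Set.mem_image_of_mem φ heE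
              have hnecs : φ e ≠ cs := by
                intro hcon
                exact hφS e heE.1 f hfedge hef
                  ⟨Sum.inl ⟨ℓ, by omega⟩, Sum.inl ⟨ℓ, by omega⟩, heE.2, hxlf, Or.inl rfl⟩
                  (hcon.trans hfcs.symm)
              rw [hCl2def] at hmem
              simp only [Finset.coe_insert, Set.mem_insert_iff, Finset.mem_coe] at hmem
              rcases hmem with hmem | hmem
              · exact absurd hmem hnecs
              · exact Finset.mem_of_mem_erase hmem
          · intro hb
            by_cases hbc : b = c
            · exact ⟨f, hfE, by rw [if_pos rfl, hbc]⟩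
            · have hbm : b ∈ φ '' Einc (Cat ℓ d) (Sum.inl ⟨ℓ, by omega⟩) := by
                rw [hφl]
                exact_mod_cast Finset.mem_insert_of_mem (Finset.mem_erase.2 ⟨hbc, hb⟩)
              obtain ⟨e, heE, hbe⟩ := hbm
              have hef : e ≠ f := by
                rintro rfl
                rw [hfcs] at hbe
                exact hcsCl (hbe ▸ hb)
              exact ⟨e, heE, by rw [if_neg hef]; exact hbe⟩
        · -- α₀ edge
          have : s(Sum.inl ⟨0, by omega⟩, (Sum.inl ⟨1, by omega⟩ : CatV ℓ d)) ≠ f := by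
            intro hcon
            exact hx1f (hcon ▸ Sym2.mem_mk_right _ _)
          beta_reduce
          rw [if_neg this]
          exact hφa0
        · -- αl edge
          have : s(Sum.inl ⟨ℓ, by omega⟩, (Sum.inl ⟨ℓ+1, by omega⟩ : CatV ℓ d)) ≠ f := by
            intro hcon
            have : αl = cs := by rw [← hφal, hcon, hfcs]
            exact hcsCl (this ▸ hαl)
          beta_reduce
          rw [if_neg this]
          exact hφal
    exact Nat.le_induction h (fun n hn ih => step n (le_trans le_rfl hn) ih) κ' hκ'
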